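/- The sequents ▲p ⊢ ■p ∨ ■¬p and ■p ∨ ■¬p ⊢ ▲p are valid on every frame, where ▲φ is true at w iff any two R-successors of w agree on both the truth and the falsity of φ and every R-successor makes φ true or false; ▲φ is false at w iff two successors disagree on truth of φ, or disagree on falsity of φ, or one successor makes φ true while another makes it false. -/

import Mathlib

/-- Formulas of the language with ¬, ∧, ∨, □, ■, 𝐈 and ▲. -/
inductive Form : Type
  | var : ℕ → Form
  | neg : Form → Form
  | conj : Form → Form → Form
  | disj : Form → Form → Form
  | box : Form → Form
  | bbox : Form → Form
  | ign : Form → Form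
  | tri : Form → Form

/-- A Kripke model for Belnap–Dunn modal logic. -/
structure Model (W : Type) where
  R : W → W → Prop
  vp : ℕ → W → Prop
  vn : ℕ → W → Prop

mutual
  /-- support of truth -/
  def tr {W : Type} (M : Model W) : Form → W → Prop
    | .var n, w => M.vp n w
    | .neg φ, w => fa M φ w
    | .conj φ ψ, w => tr M φ w ∧ tr M ψ w
    | .disj φ ψ, w => tr M φ w ∨ tr M ψ w
    | .box φ, w => ∀ w', M.R w w' → tr M φ w'
    | .bbox φ, w => (∀ w', M.R w w' → tr M φ w') ∧
        ∀ w₁ w₂, M.R w w₁ → M.R w w₂ → fa M φ w₁ → fa M φ w₂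
    | .ign φ, w => tr M φ w ∧ (∀ w', M.R w w' → w' ≠ w → fa M φ w') ∧
        ∀ w₁ w₂, M.R w w₁ → w₁ ≠ w → M.R w w₂ → w₂ ≠ w → tr M φ w₁ → tr M φ w₂
    | .tri φ, w => (∀ w₁ w₂, M.R w w₁ → M.R w w₂ →
          (tr M φ w₁ → tr M φ w₂) ∧ (fa M φ w₁ → fa M φ w₂)) ∧
        ∀ w', M.R w w' → tr M φ w' ∨ fa M φ w'
  /-- support of falsity -/
  def fa {W : Type} (M : Model W) : Form → W → Prop
    | .var n, w => M.vn n w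
    | .neg φ, w => tr M φ w
    | .conj φ ψ, w => fa M φ w ∨ fa M ψ w
    | .disj φ ψ, w => fa M φ w ∧ fa M ψ w
    | .box φ, w => ∃ w', M.R w w' ∧ fa M φ w'
    | .bbox φ, w => (∃ w', M.R w w' ∧ fa M φ w') ∨
        ∃ w₁ w₂, M.R w w₁ ∧ M.R w w₂ ∧ tr M φ w₁ ∧ ¬ tr M φ w₂
    | .ign φ, w => fa M φ w ∨ (∃ w', M.R w w' ∧ w' ≠ w ∧ tr M φ w') ∨
        ∃ w₁ w₂, (M.R w w₁ ∧ w₁ ≠ w) ∧ (M.R w w₂ ∧ w₂ ≠ w) ∧ ¬ fa M φ w₁ ∧ fa M φ w₂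
    | .tri φ, w => (∃ w₁ w₂, M.R w w₁ ∧ M.R w w₂ ∧ tr M φ w₁ ∧ ¬ tr M φ w₂) ∨
        (∃ w₁ w₂, M.R w w₁ ∧ M.R w w₂ ∧ fa M φ w₁ ∧ ¬ fa M φ w₂) ∨
        (∃ w₁ w₂, M.R w w₁ ∧ M.R w w₂ ∧ tr M φ w₁ ∧ fa M φ w₂)
end

/-- φ contains an occurrence of □ -/
def hasBox : Form → Prop
  | .var _ => False
  | .neg φ => hasBox φ
  | .conj φ ψ => hasBox φ ∨ hasBox ψ
  | .disj φ ψ => hasBox φ ∨ hasBox ψ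
  | .box _ => True
  | .bbox φ => hasBox φ
  | .ign φ => hasBox φ
  | .tri φ => hasBox φ

/-- φ contains an occurrence of ■ -/
def hasBBox : Form → Prop
  | .var _ => False
  | .neg φ => hasBBox φ
  | .conj φ ψ => hasBBox φ ∨ hasBBox ψ
  | .disj φ ψ => hasBBox φ ∨ hasBBox ψ
  | .box φ => hasBBox φ
  | .bbox _ => True
  | .ign φ => hasBBox φ
  | .tri φ => hasBBox φ

/-- φ contains an occurrence of 𝐈 -/
def hasIgn : Form → Prop
  | .var _ => False
  | .neg φ => hasIgn φ
  | .conj φ ψ => hasIgn φ ∨ hasIgn ψ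
  | .disj φ ψ => hasIgn φ ∨ hasIgn ψ
  | .box φ => hasIgn φ
  | .bbox φ => hasIgn φ
  | .ign _ => True
  | .tri φ => hasIgn φ

/-- φ contains an occurrence of ▲ -/
def hasTri : Form → Prop
  | .var _ => False
  | .neg φ => hasTri φ
  | .conj φ ψ => hasTri φ ∨ hasTri ψ
  | .disj φ ψ => hasTri φ ∨ hasTri ψ
  | .box φ => hasTri φ
  | .bbox φ => hasTri φ
  | .ign φ => hasTri φ
  | .tri _ => True

/-- validity of the sequent φ ⊢ χ on the frame (W,R) -/
def validOn {W : Type} (R : W → W → Prop) (φ χ : Form) : Prop :=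
  ∀ (vp vn : ℕ → W → Prop) (w : W), tr ⟨R, vp, vn⟩ φ w → tr ⟨R, vp, vn⟩ χ w

/-- ♦φ := ¬■¬φ -/
def dia (φ : Form) : Form := .neg (.bbox (.neg φ))

section Semantics

variable {W : Type} (M : Model W) (φ : Form) (w : W)

theorem tr_bbox_or_bbox_neg_of_tr_tri (h : tr M (.tri φ) w) :
    tr M (.disj (.bbox φ) (.bbox (.neg φ))) w := by
  simp only [tr, fa] at h ⊢
  obtain ⟨hagree, htotal⟩ := h
  by_cases hall : ∀ w', M.R w w' → tr M φ w'
  · exact Or.inl ⟨hall, fun w₁ w₂ h₁ h₂ => (hagree w₁ w₂ h₁ h₂).2⟩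
  · -- a successor where φ fails to be true makes φ false, and falsity propagates to all successors
    push Not at hall
    obtain ⟨w₀, hR₀, hnot₀⟩ := hall
    have hfa₀ : fa M φ w₀ := (htotal w₀ hR₀).resolve_left hnot₀
    exact Or.inr ⟨fun w' hR' => (hagree w₀ w' hR₀ hR').2 hfa₀,
      fun w₁ w₂ h₁ h₂ => (hagree w₁ w₂ h₁ h₂).1⟩

theorem tr_tri_of_tr_bbox_or_bbox_neg (h : tr M (.disj (.bbox φ) (.bbox (.neg φ))) w) :
    tr M (.tri φ) w := by
  simp only [tr, fa] at h ⊢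
  rcases h with ⟨hall, hfa⟩ | ⟨hfall, htr⟩
  · exact ⟨fun w₁ w₂ h₁ h₂ => ⟨fun _ => hall w₂ h₂, hfa w₁ w₂ h₁ h₂⟩,
      fun w' hR' => Or.inl (hall w' hR')⟩
  · exact ⟨fun w₁ w₂ h₁ h₂ => ⟨htr w₁ w₂ h₁ h₂, fun _ => hfall w₂ h₂⟩,
      fun w' hR' => Or.inr (hfall w' hR')⟩

theorem tr_tri_iff_tr_bbox_or_bbox_neg :
    tr M (.tri φ) w ↔ tr M (.disj (.bbox φ) (.bbox (.neg φ))) w :=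
  ⟨tr_bbox_or_bbox_neg_of_tr_tri M φ w, tr_tri_of_tr_bbox_or_bbox_neg M φ w⟩

end Semantics

/-- ▲p ⊣⊢ ■p ∨ ■¬p is valid on every frame. -/
theorem tri_iff_bbox_or_bbox_neg {W : Type} [Nonempty W] (R : W → W → Prop) :
    validOn R (.tri (.var 0)) (.disj (.bbox (.var 0)) (.bbox (.neg (.var 0)))) ∧
    validOn R (.disj (.bbox (.var 0)) (.bbox (.neg (.var 0)))) (.tri (.var 0)) :=
  ⟨fun _ _ w => (tr_tri_iff_tr_bbox_or_bbox_neg _ _ w).1,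
    fun _ _ w => (tr_tri_iff_tr_bbox_or_bbox_neg _ _ w).2⟩
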